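/- Let k > 1. As λ → 0+, the Shannon entropy of the noncentral chi-squared distribution with k degrees of freedom and noncentrality parameter λ converges to the Shannon entropy of the central chi-squared distribution with k degrees of freedom; i.e., -∫_0^∞ f_{k,λ}(x) log f_{k,λ}(x) dx → -∫_0^∞ f_k(x) log f_k(x) dx. -/

import Mathlib

open Real MeasureTheory Set Filter

/-- Modified Bessel function of the first kind of order `ν`. -/
noncomputable def besselI (ν x : ℝ) : ℝ :=
  ∑' m : ℕ, (1 / ((m.factorial : ℝ) * Real.Gamma ((m : ℝ) + ν + 1))) *
    (x / 2) ^ (2 * (m : ℝ) + ν)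

/-- PDF of the noncentral chi-squared distribution with `k` degrees of freedom and
noncentrality parameter `lam`, for `x > 0`. -/
noncomputable def ncChiSqPDF (k lam x : ℝ) : ℝ :=
  (1 / 2) * Real.exp (-(x + lam) / 2) * (x / lam) ^ (k / 4 - 1 / 2) *
    besselI (k / 2 - 1) (Real.sqrt (lam * x))

/-- PDF of the central chi-squared distribution with `k` degrees of freedom, for `x > 0`. -/
noncomputable def chiSqPDF (k x : ℝ) : ℝ :=
  x ^ (k / 2 - 1) * Real.exp (-x / 2) / (2 ^ (k / 2) * Real.Gamma (k / 2))

/-!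
For `x > 0` the noncentral density factors as `f_{k,λ}(x) = f_k(x) · r_λ(x)` with
`r_λ(x) = e^{-λ/2} Γ(k/2) ∑ₘ (λx/4)^m / (m! Γ(m + k/2))`. The estimate
`m! Γ(k/2) ≤ 2^m Γ(m + k/2)`, valid for `k ≥ 1`, bounds the series termwise by the
exponential series, so `e^{-λ/2} ≤ r_λ(x) ≤ e^{λx/2}`. Hence `f_{k,λ} → f_k` pointwise as
`λ → 0+`, and for `λ ≤ 1/2` the integrand `f_{k,λ} log f_{k,λ}` is dominated by
`f_k(x) e^{x/4} (|log f_k(x)| + 1 + x)`, which is integrable since `f_k(x) e^{x/4}` is a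
multiple of `x^{k/2-1} e^{-x/4}` and `|log x| ≤ x + 4 x^{-1/4}`. Dominated convergence
concludes.
-/

open scoped Nat Topology

lemma integrableOn_rpow_mul_exp_neg_mul {s b : ℝ} (hs : -1 < s) (hb : 0 < b) :
    IntegrableOn (fun x : ℝ => x ^ s * exp (-b * x)) (Ioi 0) := by
  simpa using integrableOn_rpow_mul_exp_neg_mul_rpow hs one_pos hb

lemma abs_log_le_self_add_rpow {x : ℝ} (hx : 0 < x) :
    |log x| ≤ x + 4 * x ^ (-(1 / 4) : ℝ) := by
  have hpos : 0 < x ^ (-(1 / 4) : ℝ) := rpow_pos_of_pos hx _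
  refine abs_le.2 ⟨?_, by linarith [log_le_sub_one_of_pos hx]⟩
  have h := log_le_rpow_div (inv_pos.2 hx).le (by norm_num : (0 : ℝ) < 1 / 4)
  rw [log_inv, inv_rpow hx.le, ← rpow_neg hx.le] at h
  linarith

lemma abs_mul_log_mul_le {a r B L : ℝ} (ha : 0 < a) (hr : 0 < r) (hrB : r ≤ B)
    (hL : |log r| ≤ L) : |a * r * log (a * r)| ≤ a * B * (|log a| + L) := by
  rw [log_mul ha.ne' hr.ne', abs_mul, abs_of_pos (mul_pos ha hr)]
  exact mul_le_mul (by gcongr) ((abs_add_le _ _).trans (by linarith)) (abs_nonneg _)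
    (mul_pos ha (hr.trans_le hrB)).le

section BesselSeries

variable {ν : ℝ}

lemma Gamma_nat_add_pos (hν : -1 < ν) (m : ℕ) : 0 < Gamma (m + ν + 1) :=
  Gamma_pos_of_pos (by linarith [(m.cast_nonneg : (0 : ℝ) ≤ m)])

lemma factorial_mul_Gamma_le_two_pow_mul_Gamma (hν : -(1 / 2) ≤ ν) (m : ℕ) :
    m ! * Gamma (ν + 1) ≤ 2 ^ m * Gamma (m + ν + 1) := by
  induction m with
  | zero => simp
  | succ m ih =>
    have hm : (0 : ℝ) ≤ m := m.cast_nonneg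
    have hΓ₀ : 0 < Gamma (ν + 1) := Gamma_pos_of_pos (by linarith)
    rw [Nat.factorial_succ, Nat.cast_mul, Nat.cast_succ, pow_succ,
      show (m : ℝ) + 1 + ν + 1 = (m + ν + 1) + 1 by ring,
      Gamma_add_one (s := m + ν + 1) (by linarith)]
    calc (m + 1) * m ! * Gamma (ν + 1) = (m + 1) * (m ! * Gamma (ν + 1)) := by ring
      _ ≤ (2 * (m + ν + 1)) * (2 ^ m * Gamma (m + ν + 1)) :=
        mul_le_mul (by linarith) ih (mul_pos (by positivity) hΓ₀).le (by linarith)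
      _ = 2 ^ m * 2 * ((m + ν + 1) * Gamma (m + ν + 1)) := by ring

noncomputable def besselISeries (ν t : ℝ) : ℝ :=
  ∑' m : ℕ, (t / 4) ^ m / (m ! * Gamma (m + ν + 1))

lemma besselISeries_term_le (hν : -(1 / 2) ≤ ν) {t : ℝ} (ht : 0 ≤ t) (m : ℕ) :
    (t / 4) ^ m / (m ! * Gamma (m + ν + 1)) ≤ (t / 2) ^ m / m ! / Gamma (ν + 1) := by
  have hΓm := Gamma_nat_add_pos (ν := ν) (by linarith) m
  have hΓ : 0 < Gamma (ν + 1) := Gamma_pos_of_pos (by linarith)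
  have hfac : (1 : ℝ) ≤ m ! := Nat.one_le_cast.2 m.factorial_pos
  have hle : m ! * Gamma (ν + 1) ≤ 2 ^ m * (m ! * Gamma (m + ν + 1)) :=
    calc m ! * Gamma (ν + 1) ≤ 2 ^ m * Gamma (m + ν + 1) :=
          factorial_mul_Gamma_le_two_pow_mul_Gamma hν m
      _ ≤ m ! * (2 ^ m * Gamma (m + ν + 1)) := le_mul_of_one_le_left (by positivity) hfac
      _ = 2 ^ m * (m ! * Gamma (m + ν + 1)) := by ring
  rw [show (t / 4) ^ m = (t / 2) ^ m / 2 ^ m by rw [← div_pow]; ring, div_div, div_div]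
  gcongr

lemma summable_besselISeries_term (hν : -(1 / 2) ≤ ν) (t : ℝ) :
    Summable fun m : ℕ => (t / 4) ^ m / (m ! * Gamma (m + ν + 1)) := by
  refine ((summable_pow_div_factorial (|t| / 2)).div_const (Gamma (ν + 1))).of_norm_bounded
    fun m => ?_
  have hΓm := Gamma_nat_add_pos (ν := ν) (by linarith) m
  calc ‖(t / 4) ^ m / (m ! * Gamma (m + ν + 1))‖
      = (|t| / 4) ^ m / (m ! * Gamma (m + ν + 1)) := by
        rw [Real.norm_eq_abs, abs_div, abs_pow, abs_div, abs_of_pos (by norm_num : (0 : ℝ) < 4),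
          abs_of_pos (mul_pos (by positivity) hΓm)]
    _ ≤ _ := besselISeries_term_le hν (abs_nonneg t) m

lemma one_le_Gamma_mul_besselISeries (hν : -(1 / 2) ≤ ν) {t : ℝ} (ht : 0 ≤ t) :
    1 ≤ Gamma (ν + 1) * besselISeries ν t := by
  have hΓ : 0 < Gamma (ν + 1) := Gamma_pos_of_pos (by linarith)
  have h := (summable_besselISeries_term hν t).le_tsum 0 fun m _ => by
    have := Gamma_nat_add_pos (ν := ν) (by linarith) m
    positivity
  rw [besselISeries, ← inv_le_iff_one_le_mul₀' hΓ]
  simpa using h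

lemma Gamma_mul_besselISeries_le_exp (hν : -(1 / 2) ≤ ν) {t : ℝ} (ht : 0 ≤ t) :
    Gamma (ν + 1) * besselISeries ν t ≤ exp (t / 2) := by
  have hΓ : 0 < Gamma (ν + 1) := Gamma_pos_of_pos (by linarith)
  have hexp : HasSum (fun m : ℕ => (t / 2) ^ m / m ! / Gamma (ν + 1))
      (exp (t / 2) / Gamma (ν + 1)) := by
    rw [exp_eq_exp_ℝ]
    exact (NormedSpace.expSeries_div_hasSum_exp _).div_const _
  rw [← le_div_iff₀' hΓ, ← hexp.tsum_eq]
  exact (summable_besselISeries_term hν t).tsum_le_tsum (besselISeries_term_le hν ht)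
    hexp.summable

lemma measurable_besselISeries (hν : -(1 / 2) ≤ ν) : Measurable (besselISeries ν) :=
  measurable_of_tendsto_metrizable
    (f := fun n t => ∑ m ∈ Finset.range n, (t / 4) ^ m / (m ! * Gamma (m + ν + 1)))
    (fun n => Finset.measurable_sum _ fun m _ => by fun_prop)
    (tendsto_pi_nhds.2 fun t => (summable_besselISeries_term hν t).hasSum.tendsto_sum_nat)

lemma besselI_sqrt_eq {t : ℝ} (ht : 0 < t) :
    besselI ν (√t) = (√t / 2) ^ ν * besselISeries ν t := by
  have hpos : 0 < √t / 2 := by positivity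
  rw [besselI, besselISeries, ← tsum_mul_left]
  refine tsum_congr fun m => ?_
  rw [rpow_add hpos, rpow_mul hpos.le, div_rpow (sqrt_nonneg t) zero_le_two, rpow_two,
    rpow_two, sq_sqrt ht.le, rpow_natCast]
  ring

end BesselSeries

section NoncentralChiSq

variable {k lam x : ℝ}

lemma chiSqPDF_pos (hk : 0 < k) (hx : 0 < x) : 0 < chiSqPDF k x := by
  have := Gamma_pos_of_pos (half_pos hk)
  unfold chiSqPDF
  positivity

lemma measurable_chiSqPDF : Measurable (chiSqPDF k) := by
  unfold chiSqPDF
  fun_prop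

noncomputable def ncChiSqRatio (k lam x : ℝ) : ℝ :=
  exp (-lam / 2) * Gamma (k / 2) * besselISeries (k / 2 - 1) (lam * x)

lemma ncChiSqPDF_eq_chiSqPDF_mul (hk : 0 < k) (hlam : 0 < lam) (hx : 0 < x) :
    ncChiSqPDF k lam x = chiSqPDF k x * ncChiSqRatio k lam x := by
  have hsqrt : (x / lam) ^ (k / 4 - 1 / 2) = √(x / lam) ^ (k / 2 - 1) := by
    rw [sqrt_eq_rpow, ← rpow_mul (div_pos hx hlam).le]
    ring_nf
  have hprod : √(x / lam) * (√(lam * x) / 2) = x / 2 := by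
    rw [← mul_div_assoc, ← sqrt_mul (div_pos hx hlam).le,
      show x / lam * (lam * x) = x ^ 2 by field_simp, sqrt_sq hx.le]
  have htwo : (2 : ℝ) ^ (k / 2) = 2 ^ (k / 2 - 1) * 2 := by
    rw [← rpow_add_one two_ne_zero, sub_add_cancel]
  rw [ncChiSqPDF, besselI_sqrt_eq (mul_pos hlam hx), hsqrt, mul_assoc _ (√(x / lam) ^ _),
    ← mul_assoc (√(x / lam) ^ _), ← mul_rpow (sqrt_nonneg _) (by positivity), hprod,
    div_rpow hx.le zero_le_two, chiSqPDF, ncChiSqRatio, htwo,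
    show -(x + lam) / 2 = -x / 2 + -lam / 2 by ring, exp_add]
  field_simp

lemma exp_neg_half_le_ncChiSqRatio (hk : 1 ≤ k) (hlam : 0 ≤ lam) (hx : 0 ≤ x) :
    exp (-lam / 2) ≤ ncChiSqRatio k lam x := by
  have h := one_le_Gamma_mul_besselISeries (ν := k / 2 - 1) (by linarith) (mul_nonneg hlam hx)
  rw [sub_add_cancel] at h
  rw [ncChiSqRatio, mul_assoc]
  exact le_mul_of_one_le_right (exp_pos _).le h

lemma ncChiSqRatio_le_exp (hk : 1 ≤ k) (hlam : 0 ≤ lam) (hx : 0 ≤ x) :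
    ncChiSqRatio k lam x ≤ exp (lam * x / 2) := by
  have h₁ := one_le_Gamma_mul_besselISeries (ν := k / 2 - 1) (by linarith) (mul_nonneg hlam hx)
  have h₂ := Gamma_mul_besselISeries_le_exp (ν := k / 2 - 1) (by linarith) (mul_nonneg hlam hx)
  rw [sub_add_cancel] at h₁ h₂
  rw [ncChiSqRatio, mul_assoc]
  exact (mul_le_of_le_one_left (by linarith) (exp_le_one_iff.2 (by linarith))).trans h₂

lemma tendsto_ncChiSqRatio (hk : 1 ≤ k) (hx : 0 ≤ x) :
    Tendsto (fun lam => ncChiSqRatio k lam x) (𝓝[>] 0) (𝓝 1) := by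
  have hlo : Tendsto (fun lam : ℝ => exp (-lam / 2)) (𝓝[>] 0) (𝓝 1) :=
    ((by fun_prop : Continuous fun lam : ℝ => exp (-lam / 2)).tendsto' 0 1 (by simp)).mono_left
      nhdsWithin_le_nhds
  have hhi : Tendsto (fun lam : ℝ => exp (lam * x / 2)) (𝓝[>] 0) (𝓝 1) :=
    ((by fun_prop : Continuous fun lam : ℝ => exp (lam * x / 2)).tendsto' 0 1 (by simp)).mono_left
      nhdsWithin_le_nhds
  refine tendsto_of_tendsto_of_tendsto_of_le_of_le' hlo hhi ?_ ?_ <;>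
    filter_upwards [self_mem_nhdsWithin] with lam hlam
  · exact exp_neg_half_le_ncChiSqRatio hk (le_of_lt hlam) hx
  · exact ncChiSqRatio_le_exp hk (le_of_lt hlam) hx

lemma tendsto_ncChiSqPDF (hk : 1 ≤ k) (hx : 0 < x) :
    Tendsto (fun lam => ncChiSqPDF k lam x) (𝓝[>] 0) (𝓝 (chiSqPDF k x)) := by
  have h := (tendsto_ncChiSqRatio hk hx.le).const_mul (chiSqPDF k x)
  rw [mul_one] at h
  refine h.congr' ?_
  filter_upwards [self_mem_nhdsWithin] with lam hlam
  exact (ncChiSqPDF_eq_chiSqPDF_mul (by linarith) hlam hx).symm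

lemma measurable_ncChiSqRatio (hk : 1 ≤ k) : Measurable (ncChiSqRatio k lam) :=
  measurable_const.mul ((measurable_besselISeries (by linarith)).comp (measurable_const_mul lam))

lemma aestronglyMeasurable_ncChiSqPDF_mul_log (hk : 1 ≤ k) (hlam : 0 < lam) :
    AEStronglyMeasurable (fun x => ncChiSqPDF k lam x * log (ncChiSqPDF k lam x))
      (volume.restrict (Ioi 0)) := by
  have hm : Measurable fun x => chiSqPDF k x * ncChiSqRatio k lam x :=
    measurable_chiSqPDF.mul (measurable_ncChiSqRatio hk)
  refine (hm.mul hm.log).aestronglyMeasurable.congr ?_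
  filter_upwards [ae_restrict_mem measurableSet_Ioi] with x hx
  rw [ncChiSqPDF_eq_chiSqPDF_mul (by linarith) hlam hx]
  rfl

noncomputable def chiSqEntropyBound (k x : ℝ) : ℝ :=
  chiSqPDF k x * exp (x / 4) * (|log (chiSqPDF k x)| + (1 + x))

lemma abs_ncChiSqPDF_mul_log_le (hk : 1 ≤ k) (hlam : 0 < lam) (hlam' : lam ≤ 1 / 2)
    (hx : 0 < x) :
    |ncChiSqPDF k lam x * log (ncChiSqPDF k lam x)| ≤ chiSqEntropyBound k x := by
  have hlo := exp_neg_half_le_ncChiSqRatio hk hlam.le hx.le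
  have hhi := ncChiSqRatio_le_exp hk hlam.le hx.le
  have hr : 0 < ncChiSqRatio k lam x := (exp_pos _).trans_le hlo
  rw [ncChiSqPDF_eq_chiSqPDF_mul (by linarith) hlam hx, chiSqEntropyBound]
  refine abs_mul_log_mul_le (chiSqPDF_pos (k := k) (by linarith) hx) hr
    (hhi.trans (exp_le_exp.2 (by nlinarith : lam * x / 2 ≤ x / 4))) (abs_le.2 ⟨?_, ?_⟩)
  · have := log_le_log (exp_pos _) hlo
    rw [log_exp] at this
    linarith
  · have := log_le_log hr hhi
    rw [log_exp] at this
    nlinarith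

lemma exists_chiSqEntropyBound_le (hk : 0 < k) : ∃ C, ∀ x > 0, chiSqEntropyBound k x ≤
    C * ((x ^ (k / 2 - 1) + x ^ (k / 2) + x ^ (k / 2 - 5 / 4)) * exp (-(1 / 4) * x)) := by
  set ν := k / 2 - 1
  set D := (2 : ℝ) ^ (k / 2) * Gamma (k / 2)
  have hD : 0 < D := by
    have := Gamma_pos_of_pos (half_pos hk)
    positivity
  refine ⟨(|log D| + 5 / 2 + 5 * |ν|) / D, fun x hx => ?_⟩
  have hxν : 0 < x ^ ν := rpow_pos_of_pos hx ν
  have hy : 0 ≤ x ^ (-(1 / 4) : ℝ) := (rpow_pos_of_pos hx _).le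
  have hlog : |log (chiSqPDF k x)| ≤ |ν| * (x + 4 * x ^ (-(1 / 4) : ℝ)) + x / 2 + |log D| := by
    rw [chiSqPDF, log_div (by positivity) hD.ne', log_mul hxν.ne' (exp_pos _).ne', log_rpow hx,
      log_exp]
    calc |ν * log x + -x / 2 - log D| ≤ |ν * log x| + |-x / 2| + |log D| :=
          (abs_sub _ _).trans (by gcongr; exact abs_add_le _ _)
      _ ≤ _ := by
        rw [abs_mul, abs_div, abs_neg, abs_of_pos hx, abs_two]
        gcongr
        exact abs_log_le_self_add_rpow hx
  have hpdf : chiSqPDF k x * exp (x / 4) = x ^ ν * exp (-(1 / 4) * x) / D := by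
    rw [chiSqPDF, div_mul_eq_mul_div, mul_assoc, ← exp_add,
      show -x / 2 + x / 4 = -(1 / 4) * x by ring]
  rw [chiSqEntropyBound, hpdf, show k / 2 = ν + 1 by ring,
    show ν + 1 - 5 / 4 = ν + -(1 / 4) by ring, rpow_add_one hx.ne', rpow_add hx]
  calc x ^ ν * exp (-(1 / 4) * x) / D * (|log (chiSqPDF k x)| + (1 + x))
      ≤ x ^ ν * exp (-(1 / 4) * x) / D *
          (|ν| * (x + 4 * x ^ (-(1 / 4) : ℝ)) + x / 2 + |log D| + (1 + x)) := by
        gcongr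
    _ ≤ x ^ ν * exp (-(1 / 4) * x) / D *
          ((|log D| + 5 / 2 + 5 * |ν|) * (1 + x + x ^ (-(1 / 4) : ℝ))) := by
        gcongr
        nlinarith [mul_nonneg (abs_nonneg ν) hx.le, mul_nonneg (abs_nonneg (log D)) hx.le,
          mul_nonneg (abs_nonneg ν) hy, mul_nonneg (abs_nonneg (log D)) hy]
    _ = _ := by ring

lemma integrableOn_chiSqEntropyBound (hk : 1 / 2 < k) :
    IntegrableOn (chiSqEntropyBound k) (Ioi 0) := by
  obtain ⟨C, hC⟩ := exists_chiSqEntropyBound_le (k := k) (by linarith)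
  have hdom : IntegrableOn (fun x => C * ((x ^ (k / 2 - 1) + x ^ (k / 2) + x ^ (k / 2 - 5 / 4)) *
      exp (-(1 / 4) * x))) (Ioi 0) := by
    refine Integrable.const_mul ?_ C
    simp_rw [add_mul]
    exact ((integrableOn_rpow_mul_exp_neg_mul (by linarith) (by norm_num)).add
      (integrableOn_rpow_mul_exp_neg_mul (by linarith) (by norm_num))).add
      (integrableOn_rpow_mul_exp_neg_mul (by linarith) (by norm_num))
  have hmeas : Measurable (chiSqEntropyBound k) :=
    (measurable_chiSqPDF.mul (by fun_prop)).mul (measurable_chiSqPDF.log.abs.add (by fun_prop))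
  refine hdom.mono' hmeas.aestronglyMeasurable ?_
  filter_upwards [ae_restrict_mem measurableSet_Ioi] with x hx
  have hx' : 0 < x := hx
  have := chiSqPDF_pos (k := k) (by linarith) hx'
  rw [norm_of_nonneg (by unfold chiSqEntropyBound; positivity)]
  exact hC x hx

end NoncentralChiSq

theorem tendsto_shannonEntropy_ncChiSq (k : ℝ) (hk : 1 < k) :
    Tendsto
      (fun lam => -∫ x in Ioi (0 : ℝ), ncChiSqPDF k lam x * Real.log (ncChiSqPDF k lam x))
      (nhdsWithin 0 (Ioi (0 : ℝ)))
      (nhds (-∫ x in Ioi (0 : ℝ), chiSqPDF k x * Real.log (chiSqPDF k x))) := by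
  refine (tendsto_integral_filter_of_dominated_convergence (chiSqEntropyBound k) ?_ ?_
    (integrableOn_chiSqEntropyBound (by linarith)) ?_).neg
  · filter_upwards [self_mem_nhdsWithin] with lam hlam
    exact aestronglyMeasurable_ncChiSqPDF_mul_log hk.le hlam
  · filter_upwards [Ioc_mem_nhdsGT (by norm_num : (0 : ℝ) < 1 / 2)] with lam hlam
    filter_upwards [ae_restrict_mem measurableSet_Ioi] with x hx
    exact abs_ncChiSqPDF_mul_log_le hk.le hlam.1 hlam.2 hx
  · filter_upwards [ae_restrict_mem measurableSet_Ioi] with x hx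
    exact continuous_mul_log.continuousAt.tendsto.comp (tendsto_ncChiSqPDF hk.le hx)
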